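/- A Kleene algebra defined on an algebraic lattice has the interpolation property (for all prime filters P, Q with P ⊆ g(P), Q ⊆ g(Q), P ⊆ g(Q), and all a ∈ P, b ∈ Q: a ∧ b ≰ c(a) ∨ c(b)) if and only if it satisfies condition (M): for all completely join-irreducible p, q with p*, q* ≤ p, q there is a completely join-irreducible k with p*, q* ≤ k ≤ p, q. -/

import Mathlib

def CompletelyJoinIrreducible {A : Type*} [CompleteLattice A] (j : A) : Prop :=
  ∀ S : Set A, j = sSup S → j ∈ S

def star {A : Type*} [CompleteLattice A] (c : A → A) (j : A) : A :=
  sInf {x : A | ¬ x ≤ c j}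

/-- A prime filter of a lattice. -/
def IsPrimeFilter {A : Type*} [Lattice A] (P : Set A) : Prop :=
  P.Nonempty ∧ P ≠ Set.univ ∧
  (∀ a b : A, a ∈ P → a ≤ b → b ∈ P) ∧
  (∀ a b : A, a ∈ P → b ∈ P → a ⊓ b ∈ P) ∧
  (∀ a b : A, a ⊔ b ∈ P → a ∈ P ∨ b ∈ P)

/-- `g(P)` is the complement of the image `c(P)`; for an involution `c` this is
`{x : c x ∉ P}`. -/
def gflt {A : Type*} (c : A → A) (P : Set A) : Set A := {x | c x ∉ P}

/-!
Since `c` is an involutive order reversal, the algebraic lattice `A` is also dually algebraic,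
and a Zorn argument (an element maximal among those not above a compact element is completely
meet-irreducible) shows that any failure `x ≰ y` is witnessed by a completely join-irreducible
`j ≤ x` with `j ≰ y`. For completely join-irreducible `p` this gives `p* ≤ x ↔ x ≰ c p`, so (M)
only speaks about the relation `x ≰ c y`.

Interpolation ⇒ (M): apply interpolation to the principal prime filters `↑p`, `↑q` and take a
completely join-irreducible `k ≤ p ⊓ q` with `k ≰ c p ⊔ c q`.

(M) ⇒ interpolation: if `a ⊓ b ≤ d := c a ⊔ c b`, the completely join-irreducibles below `a`
(resp. `b`) and not below `d` have their join in `P` (resp. `Q`). Were they all `c`-related,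
`c` of the second join would lie in `P`, against `P ⊆ g(Q)`; so (M) applies to some pair `p, q`
(positive by the Kleene inequality), and the resulting `k ≤ a ⊓ b ≤ c a ⊔ c b` lies below `c p`
or `c q`, contradicting `p*, q* ≤ k`.
-/

section CompleteLattice

variable {A : Type*} [CompleteLattice A]

lemma IsCompactElement.exists_le_maximal_not_le {k a : A} (hk : IsCompactElement k)
    (h : ¬ k ≤ a) : ∃ m, a ≤ m ∧ Maximal (fun w => ¬ k ≤ w) m := by
  refine zorn_le_nonempty₀ {w | ¬ k ≤ w}
    (fun C hC hchain y hy => ⟨sSup C, fun hkC => ?_, fun _ => le_sSup⟩) a h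
  obtain ⟨w, hwC, hkw⟩ := (CompleteLattice.isCompactElement_iff_le_of_directed_sSup_le A k).mp
    hk C ⟨y, hy⟩ hchain.directedOn hkC
  exact hC hwC hkw

variable {j : A}

lemma CompletelyJoinIrreducible.ne_bot (hj : CompletelyJoinIrreducible j) : j ≠ ⊥ := fun h => by
  simpa using hj ∅ (by simp [h])

lemma CompletelyJoinIrreducible.isCompactElement [IsCompactlyGenerated A]
    (hj : CompletelyJoinIrreducible j) : IsCompactElement j := by
  obtain ⟨s, hs, hsup⟩ := IsCompactlyGenerated.exists_sSup_eq j
  exact hs j (hj s hsup.symm)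

lemma CompletelyJoinIrreducible.supPrime
    (hdist : ∀ x y z : A, x ⊓ (y ⊔ z) = (x ⊓ y) ⊔ (x ⊓ z))
    (hj : CompletelyJoinIrreducible j) : SupPrime j := by
  refine ⟨fun hmin => hj.ne_bot hmin.eq_bot, fun u v h => ?_⟩
  simpa using hj {j ⊓ u, j ⊓ v} (by rw [sSup_pair, ← hdist, inf_eq_left.mpr h])

lemma CompletelyJoinIrreducible.exists_le_of_le_sSup [IsCompactlyGenerated A]
    (hdist : ∀ x y z : A, x ⊓ (y ⊔ z) = (x ⊓ y) ⊔ (x ⊓ z))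
    (hj : CompletelyJoinIrreducible j) {S : Set A} (h : j ≤ sSup S) : ∃ s ∈ S, j ≤ s := by
  obtain ⟨t, htS, hjt⟩ :=
    (CompleteLattice.isCompactElement_iff_exists_le_sSup_of_le_sSup A j).mp hj.isCompactElement S h
  obtain ⟨s, hst, hjs⟩ := (hj.supPrime hdist).le_finset_sup.mp hjt
  exact ⟨s, htS hst, hjs⟩

lemma CompletelyJoinIrreducible.isPrimeFilter_Ici
    (hdist : ∀ x y z : A, x ⊓ (y ⊔ z) = (x ⊓ y) ⊔ (x ⊓ z))
    (hj : CompletelyJoinIrreducible j) : IsPrimeFilter (Set.Ici j) :=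
  ⟨Set.nonempty_Ici, fun h => hj.ne_bot (le_bot_iff.mp (h ▸ Set.mem_univ ⊥ : ⊥ ∈ Set.Ici j)),
    fun _ _ ha hab => ha.trans hab, fun _ _ => le_inf, fun _ _ hab => (hj.supPrime hdist).2 hab⟩

end CompleteLattice

section IsPrimeFilter

variable {A : Type*} [Lattice A] {P : Set A} {x y z : A}

lemma IsPrimeFilter.mem_of_le (hP : IsPrimeFilter P) (hx : x ∈ P) (h : x ≤ y) : y ∈ P :=
  hP.2.2.1 x y hx h

lemma IsPrimeFilter.sup_notMem (hP : IsPrimeFilter P) (hy : y ∉ P) (hz : z ∉ P) : y ⊔ z ∉ P :=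
  fun h => (hP.2.2.2.2 y z h).elim hy hz

lemma IsPrimeFilter.mem_of_le_sup (hP : IsPrimeFilter P) (hx : x ∈ P) (h : x ≤ y ⊔ z)
    (hy : y ∉ P) : z ∈ P :=
  (hP.2.2.2.2 y z (hP.mem_of_le hx h)).resolve_left hy

end IsPrimeFilter

lemma not_le_self_of_not_le {A : Type*} [Lattice A] {c : A → A}
    (hkl : ∀ x y : A, x ⊓ c x ≤ y ⊔ c y) {x y d : A} (hyd : y ⊔ c y ≤ d) (hx : ¬ x ≤ d) :
    ¬ x ≤ c x := fun h => hx (((inf_eq_left.mpr h).symm.trans_le (hkl x y)).trans hyd)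

section Involution

variable {A : Type*} [CompleteLattice A] {c : A → A}
  (hinv : Function.Involutive c) (hanti : ∀ x y : A, x ≤ y ↔ c y ≤ c x)
include hinv hanti

def involutionOrderIso : A ≃o Aᵒᵈ where
  toFun x := OrderDual.toDual (c x)
  invFun x := c (OrderDual.ofDual x)
  left_inv := hinv
  right_inv := hinv
  map_rel_iff' := (hanti _ _).symm

lemma le_apply_comm {x y : A} : x ≤ c y ↔ y ≤ c x := by
  rw [hanti x, hinv]

lemma apply_le_comm {x y : A} : c x ≤ y ↔ c y ≤ x := by
  rw [hanti (c x), hinv]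

lemma apply_inf (x y : A) : c (x ⊓ y) = c x ⊔ c y :=
  (involutionOrderIso hinv hanti).map_inf x y

lemma apply_sInf (S : Set A) : c (sInf S) = sSup (c '' S) :=
  by rw [sSup_image]; exact (involutionOrderIso hinv hanti).map_sInf S

lemma apply_sSup (S : Set A) : c (sSup S) = sInf (c '' S) :=
  by rw [sInf_image]; exact (involutionOrderIso hinv hanti).map_sSup S

lemma completelyJoinIrreducible_apply_of_maximal {k m : A}
    (hm : Maximal (fun w => ¬ k ≤ w) m) : CompletelyJoinIrreducible (c m) := by
  intro S hS
  have hmS : m = sInf (c '' S) := by rw [← apply_sSup hinv hanti, ← hS, hinv]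
  by_contra hcm
  refine hm.1 (hmS ▸ le_sInf ?_)
  rintro _ ⟨s, hs, rfl⟩
  have hms : m ≤ c s := hmS ▸ sInf_le ⟨s, hs, rfl⟩
  by_contra hks
  exact hcm (by rwa [hm.eq_of_le hks hms, hinv])

lemma exists_completelyJoinIrreducible_le_not_le [IsCompactlyGenerated A] {x y : A}
    (h : ¬ x ≤ y) : ∃ j, CompletelyJoinIrreducible j ∧ j ≤ x ∧ ¬ j ≤ y := by
  obtain ⟨k, hk, hky, hkx⟩ : ∃ k, IsCompactElement k ∧ k ≤ c y ∧ ¬ k ≤ c x := by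
    have : ¬ c y ≤ c x := by rwa [← hanti]
    rw [le_iff_compact_le_imp] at this
    push Not at this
    exact this
  obtain ⟨m, hxm, hm⟩ := hk.exists_le_maximal_not_le hkx
  refine ⟨c m, completelyJoinIrreducible_apply_of_maximal hinv hanti hm, ?_, fun hmy => ?_⟩
  · rwa [apply_le_comm hinv hanti] at hxm
  · exact hm.1 (hky.trans ((apply_le_comm hinv hanti).mp hmy))

lemma le_sup_sSup_completelyJoinIrreducible [IsCompactlyGenerated A] (x d : A) :
    x ≤ d ⊔ sSup {j | CompletelyJoinIrreducible j ∧ j ≤ x ∧ ¬ j ≤ d} := by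
  by_contra h
  obtain ⟨j, hj, hjx, hjd⟩ := exists_completelyJoinIrreducible_le_not_le hinv hanti h
  exact hjd (le_sup_of_le_right (le_sSup ⟨hj, hjx, fun h => hjd (le_sup_of_le_left h)⟩))

lemma CompletelyJoinIrreducible.star_le_iff [IsCompactlyGenerated A]
    (hdist : ∀ x y z : A, x ⊓ (y ⊔ z) = (x ⊓ y) ⊔ (x ⊓ z))
    {p x : A} (hp : CompletelyJoinIrreducible p) : star c p ≤ x ↔ ¬ x ≤ c p := by
  refine ⟨fun hpx hxp => ?_, fun h => sInf_le h⟩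
  have : p ≤ sSup (c '' {x | ¬ x ≤ c p}) := by
    rw [← apply_sInf hinv hanti, le_apply_comm hinv hanti]
    exact hpx.trans hxp
  obtain ⟨_, ⟨y, hy, rfl⟩, hpy⟩ := hp.exists_le_of_le_sSup hdist this
  exact hy ((le_apply_comm hinv hanti).mp hpy)

lemma Ici_subset_gflt_Ici {u v : A} (h : ¬ u ≤ c v) : Set.Ici u ⊆ gflt c (Set.Ici v) :=
  fun _ hux hvx => h (hux.trans ((le_apply_comm hinv hanti).mp hvx))

end Involution
section Kleene

variable {A : Type*} [CompleteLattice A]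

def InterpolationProperty (c : A → A) : Prop :=
  ∀ P Q : Set A, IsPrimeFilter P → IsPrimeFilter Q →
    P ⊆ gflt c P → Q ⊆ gflt c Q → P ⊆ gflt c Q →
    ∀ a ∈ P, ∀ b ∈ Q, ¬ a ⊓ b ≤ c a ⊔ c b

def ConditionM (c : A → A) : Prop :=
  ∀ p q : A, CompletelyJoinIrreducible p → CompletelyJoinIrreducible q →
    star c p ≤ p → star c p ≤ q → star c q ≤ p → star c q ≤ q →
    ∃ k : A, CompletelyJoinIrreducible k ∧ star c p ≤ k ∧ star c q ≤ k ∧ k ≤ p ∧ k ≤ q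

variable [IsCompactlyGenerated A] (hdist : ∀ x y z : A, x ⊓ (y ⊔ z) = (x ⊓ y) ⊔ (x ⊓ z))
  {c : A → A} (hinv : Function.Involutive c) (hanti : ∀ x y : A, x ≤ y ↔ c y ≤ c x)
include hdist hinv hanti

lemma conditionM_of_interpolationProperty (hint : InterpolationProperty c) : ConditionM c := by
  intro p q hp hq hpp _ hqp hqq
  rw [hp.star_le_iff hinv hanti hdist] at hpp
  rw [hq.star_le_iff hinv hanti hdist] at hqp hqq
  obtain ⟨k, hk, hkpq, hkc⟩ := exists_completelyJoinIrreducible_le_not_le hinv hanti <|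
    hint _ _ (hp.isPrimeFilter_Ici hdist) (hq.isPrimeFilter_Ici hdist)
      (Ici_subset_gflt_Ici hinv hanti hpp) (Ici_subset_gflt_Ici hinv hanti hqq)
      (Ici_subset_gflt_Ici hinv hanti hqp) p le_rfl q le_rfl
  exact ⟨k, hk, (hp.star_le_iff hinv hanti hdist).mpr fun h => hkc (le_sup_of_le_left h),
    (hq.star_le_iff hinv hanti hdist).mpr fun h => hkc (le_sup_of_le_right h),
    hkpq.trans inf_le_left, hkpq.trans inf_le_right⟩

lemma interpolationProperty_of_conditionM (hkl : ∀ x y : A, x ⊓ c x ≤ y ⊔ c y)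
    (hM : ConditionM c) : InterpolationProperty c := by
  intro P Q hP hQ hPP hQQ hPQ a ha b hb hab
  set d := c a ⊔ c b
  have hdP : d ∉ P := hP.sup_notMem (hPP ha) fun hcb => hPQ hcb (by rwa [hinv])
  have hdQ : d ∉ Q := hQ.sup_notMem (hPQ ha) (hQQ hb)
  set Sa := {j | CompletelyJoinIrreducible j ∧ j ≤ a ∧ ¬ j ≤ d}
  set Sb := {j | CompletelyJoinIrreducible j ∧ j ≤ b ∧ ¬ j ≤ d}
  have hSa : sSup Sa ∈ P :=
    hP.mem_of_le_sup ha (le_sup_sSup_completelyJoinIrreducible hinv hanti a d) hdP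
  have hSb : sSup Sb ∈ Q :=
    hQ.mem_of_le_sup hb (le_sup_sSup_completelyJoinIrreducible hinv hanti b d) hdQ
  obtain ⟨p, ⟨hp, hpa, hpd⟩, q, ⟨hq, hqb, hqd⟩, hqp⟩ : ∃ p ∈ Sa, ∃ q ∈ Sb, ¬ q ≤ c p := by
    by_contra! h
    have : sSup Sa ≤ c (sSup Sb) := sSup_le fun p hp =>
      (le_apply_comm hinv hanti).mp (sSup_le fun q hq => h p hp q hq)
    exact hPQ (hP.mem_of_le hSa this) (by rwa [hinv])
  have hpos {x : A} : ¬ x ≤ d → ¬ x ≤ c x :=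
    not_le_self_of_not_le hkl (sup_le hab (apply_inf hinv hanti a b).le)
  have hpq : ¬ p ≤ c q := fun h => hqp ((le_apply_comm hinv hanti).mp h)
  have hstar {j x : A} (hj : CompletelyJoinIrreducible j) : star c j ≤ x ↔ ¬ x ≤ c j :=
    hj.star_le_iff hinv hanti hdist
  obtain ⟨k, hk, hpk, hqk, hkp, hkq⟩ := hM p q hp hq ((hstar hp).mpr (hpos hpd))
    ((hstar hp).mpr hqp) ((hstar hq).mpr hpq) ((hstar hq).mpr (hpos hqd))
  rcases (hk.supPrime hdist).2 ((le_inf (hkp.trans hpa) (hkq.trans hqb)).trans hab) with h | h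
  · exact (hstar hp).mp hpk (h.trans ((hanti _ _).mp hpa))
  · exact (hstar hq).mp hqk (h.trans ((hanti _ _).mp hqb))

end Kleene

/-- For a Kleene algebra on an algebraic lattice, the interpolation property
(in Cignoli's prime-filter form) is equivalent to condition (M). -/
theorem interpolation_iff_condition_M {A : Type*}
    [CompleteLattice A] [IsCompactlyGenerated A]
    (hdist : ∀ x y z : A, x ⊓ (y ⊔ z) = (x ⊓ y) ⊔ (x ⊓ z))
    (c : A → A) (hinv : ∀ x, c (c x) = x)
    (hanti : ∀ x y : A, x ≤ y ↔ c y ≤ c x)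
    (hkl : ∀ x y : A, x ⊓ c x ≤ y ⊔ c y) :
    (∀ P Q : Set A, IsPrimeFilter P → IsPrimeFilter Q →
      P ⊆ gflt c P → Q ⊆ gflt c Q → P ⊆ gflt c Q →
      ∀ a ∈ P, ∀ b ∈ Q, ¬ a ⊓ b ≤ c a ⊔ c b) ↔
    (∀ p q : A, CompletelyJoinIrreducible p → CompletelyJoinIrreducible q →
      star c p ≤ p → star c p ≤ q → star c q ≤ p → star c q ≤ q →
      ∃ k : A, CompletelyJoinIrreducible k ∧
        star c p ≤ k ∧ star c q ≤ k ∧ k ≤ p ∧ k ≤ q) :=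
  ⟨conditionM_of_interpolationProperty hdist hinv hanti,
    interpolationProperty_of_conditionM hdist hinv hanti hkl⟩
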